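/- arXiv:1712.00210 — 3 statements merged into one kernel-verified Lean document; each statement's English description precedes it below -/
import Mathlib

section
/- Let S be a finite sequence over the alphabet {1,...,k} ∪ {B}, and suppose a(t) = a(t+1) = i for some index t and some i ∈ {1,...,k}. Then the sequence S' obtained from S by deleting the entry at position t+1 has the same total weight as S, where total weight is the sum of weights of all neighbor pairs. -/
open scoped Classical
open Finset

noncomputable section

/-- Entry of the sequence at position `t` (`none` = blank `B`, out-of-range reads `none`). -/
def seqGet {k : ℕ} (S : List (Option (Fin k))) (t : ℕ) : Option (Fin k) := S.getD t none

/-- `t1 < t2` are neighbors: both equal to some number `i` with no `i` strictly in between. -/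
def IsNbr {k : ℕ} (S : List (Option (Fin k))) (t1 t2 : ℕ) : Prop :=
  t1 < t2 ∧ t2 < S.length ∧ ∃ i : Fin k, seqGet S t1 = some i ∧ seqGet S t2 = some i ∧
    ∀ t, t1 < t → t < t2 → seqGet S t ≠ some i

/-- The set of distinct symbols appearing strictly between positions `t1` and `t2`. -/
def between {k : ℕ} (S : List (Option (Fin k))) (t1 t2 : ℕ) : Finset (Option (Fin k)) :=
  (Finset.Ioo t1 t2).image (seqGet S)

/-- Weight of a pair: `1/b` where `b` is the number of distinct symbols in between (`0` if `b = 0`). -/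
def wt {k : ℕ} (S : List (Option (Fin k))) (t1 t2 : ℕ) : ℝ :=
  ((between S t1 t2).card : ℝ)⁻¹

/-- Total weight: the sum of weights of all neighbor pairs. -/
def totalWeight {k : ℕ} (S : List (Option (Fin k))) : ℝ :=
  ∑ p ∈ (Finset.range S.length ×ˢ Finset.range S.length).filter
      (fun p => IsNbr S p.1 p.2), wt S p.1 p.2

/-- The number of occurrences of the blank symbol `B` in the sequence. -/
def numBlanks {k : ℕ} (S : List (Option (Fin k))) : ℕ :=
  (S.filter (fun x => x = none)).length

/-- Permissibility: consecutive numeric entries are weakly increasing. -/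
def Permissible {k : ℕ} (S : List (Option (Fin k))) : Prop :=
  ∀ t (i j : Fin k), seqGet S t = some i → seqGet S (t + 1) = some j → i ≤ j

lemma seqGet_eraseIdx {k : ℕ} (S : List (Option (Fin k))) (t s : ℕ) :
    seqGet (S.eraseIdx (t+1)) s = if s ≤ t then seqGet S s else seqGet S (s+1) := by
  simp only [seqGet, List.getD_eq_getElem?_getD, List.getElem?_eraseIdx]
  by_cases h : s ≤ t
  · rw [if_pos (by omega : s < t + 1), if_pos h]
  · rw [if_neg (by omega : ¬ s < t + 1), if_neg h]

section Main

variable {k : ℕ} (S : List (Option (Fin k))) (t : ℕ) (i : Fin k)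

/-- maps an index of `S' = S.eraseIdx (t+1)` to the corresponding index of `S`,
for a *left* endpoint of a pair. -/
def Ga (t a : ℕ) : ℕ := if a < t then a else a + 1
/-- same, for a *right* endpoint. -/
def Gb (t b : ℕ) : ℕ := if b ≤ t then b else b + 1

variable (ht : t + 1 < S.length) (h1 : seqGet S t = some i) (h2 : seqGet S (t+1) = some i)

include ht h1 h2

lemma seqGet_Ga (a : ℕ) : seqGet S (Ga t a) = seqGet (S.eraseIdx (t+1)) a := by
  rw [seqGet_eraseIdx, Ga]
  rcases lt_trichotomy a t with h | rfl | h
  · rw [if_pos h, if_pos h.le]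
  · rw [if_neg (lt_irrefl _), if_pos le_rfl, h1, h2]
  · rw [if_neg (by omega), if_neg (by omega)]

lemma seqGet_Gb (b : ℕ) : seqGet S (Gb t b) = seqGet (S.eraseIdx (t+1)) b := by
  rw [seqGet_eraseIdx, Gb]
  by_cases h : b ≤ t
  · rw [if_pos h, if_pos h]
  · rw [if_neg h, if_neg h]

lemma between_back (a b : ℕ) (hab : a < b) :
    between S (Ga t a) (Gb t b) = between (S.eraseIdx (t+1)) a b := by
  ext x
  simp only [between, Finset.mem_image, Finset.mem_Ioo, Ga, Gb]
  constructor
  · rintro ⟨s, ⟨hs1, hs2⟩, rfl⟩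
    by_cases hat : a < t
    · rw [if_pos hat] at hs1
      by_cases hbt : b ≤ t
      · rw [if_pos hbt] at hs2
        exact ⟨s, ⟨hs1, hs2⟩, by rw [seqGet_eraseIdx, if_pos (by omega)]⟩
      · rw [if_neg hbt] at hs2
        rcases lt_trichotomy s (t+1) with h | rfl | h
        · exact ⟨s, ⟨hs1, by omega⟩, by rw [seqGet_eraseIdx, if_pos (by omega)]⟩
        · exact ⟨t, ⟨hat, by omega⟩,
            by rw [seqGet_eraseIdx, if_pos le_rfl, h1, h2]⟩
        · refine ⟨s - 1, ⟨by omega, by omega⟩, ?_⟩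
          rw [seqGet_eraseIdx, if_neg (by omega)]
          congr 1; omega
    · rw [if_neg hat] at hs1
      rw [if_neg (by omega)] at hs2
      refine ⟨s - 1, ⟨by omega, by omega⟩, ?_⟩
      rw [seqGet_eraseIdx, if_neg (by omega)]
      congr 1; omega
  · rintro ⟨s, ⟨hs1, hs2⟩, rfl⟩
    rw [seqGet_eraseIdx]
    by_cases hst : s ≤ t
    · rw [if_pos hst]
      refine ⟨s, ⟨?_, ?_⟩, rfl⟩
      · split <;> omega
      · split <;> omega
    · rw [if_neg hst]
      refine ⟨s + 1, ⟨?_, ?_⟩, rfl⟩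
      · split <;> omega
      · rw [if_neg (by omega)]; omega

lemma nbr_back (a b : ℕ) (h : IsNbr (S.eraseIdx (t+1)) a b) :
    IsNbr S (Ga t a) (Gb t b) := by
  obtain ⟨hab, hblen, j, hja, hjb, hno⟩ := h
  have hlen : (S.eraseIdx (t+1)).length = S.length - 1 := by
    rw [List.length_eraseIdx, if_pos ht]
  refine ⟨by simp only [Ga, Gb]; (repeat' split) <;> omega,
    by simp only [Gb]; split <;> omega, j,
    by rw [seqGet_Ga S t i ht h1 h2]; exact hja,
    by rw [seqGet_Gb S t i ht h1 h2]; exact hjb, ?_⟩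
  intro s hs1 hs2 hsj
  simp only [Ga] at hs1; simp only [Gb] at hs2
  -- send s back to an index of S'
  rcases lt_trichotomy s (t+1) with h | rfl | h
  · -- s ≤ t
    have hat : a < t := by split at hs1 <;> omega
    have hsb : s < b := by split at hs2 <;> omega
    have hsa : a < s := by split at hs1 <;> omega
    exact hno s hsa hsb (by rw [seqGet_eraseIdx, if_pos (by omega)]; exact hsj)
  · -- s = t+1 : then a < t and t < b, and seqGet S' t = some i contradicts hno
    have hat : a < t := by split at hs1 <;> omega
    have htb : t < b := by split at hs2 <;> omega
    refine hno t hat htb ?_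
    rw [seqGet_eraseIdx, if_pos le_rfl, h1, ← h2]
    exact hsj
  · -- s ≥ t+2
    have hsa : a < s - 1 := by split at hs1 <;> omega
    have hsb : s - 1 < b := by split at hs2 <;> omega
    refine hno (s - 1) hsa hsb ?_
    rw [seqGet_eraseIdx, if_neg (by omega)]
    rw [show s - 1 + 1 = s by omega]
    exact hsj

lemma nbr_conv (a b : ℕ) (hab : a < b) (hblen : b < (S.eraseIdx (t+1)).length)
    (h : IsNbr S (Ga t a) (Gb t b)) : IsNbr (S.eraseIdx (t+1)) a b := by
  obtain ⟨_, _, j, hja, hjb, hno⟩ := h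
  refine ⟨hab, hblen, j,
    by rw [← seqGet_Ga S t i ht h1 h2]; exact hja,
    by rw [← seqGet_Gb S t i ht h1 h2]; exact hjb, ?_⟩
  intro s hs1 hs2 hsj
  rw [seqGet_eraseIdx] at hsj
  by_cases hst : s ≤ t
  · rw [if_pos hst] at hsj
    refine hno s ?_ ?_ hsj
    · simp only [Ga]; split <;> omega
    · simp only [Gb]; split <;> omega
  · rw [if_neg hst] at hsj
    refine hno (s+1) ?_ ?_ hsj
    · simp only [Ga]; split <;> omega
    · simp only [Gb]; split <;> omega

lemma not_endpoint (a b : ℕ) (h : IsNbr S a b) (hne : (a, b) ≠ (t, t+1)) :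
    a ≠ t ∧ b ≠ t + 1 := by
  obtain ⟨hab, hblen, j, hja, hjb, hno⟩ := h
  constructor
  · rintro rfl
    have hji : j = i := by rw [h1] at hja; exact (Option.some_injective _ hja).symm
    subst hji
    rcases eq_or_lt_of_le (show a + 1 ≤ b by omega) with h | h
    · exact hne (by rw [← h])
    · exact hno (a+1) (by omega) h h2
  · rintro rfl
    have hji : j = i := by rw [h2] at hjb; exact (Option.some_injective _ hjb).symm
    subst hji
    rcases lt_trichotomy a t with h | rfl | h
    · exact hno t h (by omega) h1
    · exact hne rfl
    · omega

end Main

/-- Deleting one of two identical consecutive numeric entries leaves the total weight unchanged. -/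
theorem totalWeight_eraseIdx_of_repeat {k : ℕ} (S : List (Option (Fin k))) (t : ℕ) (i : Fin k)
    (ht : t + 1 < S.length) (h1 : seqGet S t = some i) (h2 : seqGet S (t + 1) = some i) :
    totalWeight (S.eraseIdx (t + 1)) = totalWeight S := by
  classical
  have hlen : (S.eraseIdx (t+1)).length = S.length - 1 := by
    rw [List.length_eraseIdx, if_pos ht]
  have hnbr_tt : IsNbr S t (t+1) :=
    ⟨by omega, ht, i, h1, h2, fun s hs1 hs2 => by omega⟩
  have hmem : (t, t+1) ∈ (Finset.range S.length ×ˢ Finset.range S.length).filter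
      (fun p => IsNbr S p.1 p.2) := by
    simp only [Finset.mem_filter, Finset.mem_product, Finset.mem_range]
    exact ⟨⟨by omega, ht⟩, hnbr_tt⟩
  have hwt0 : wt S t (t+1) = 0 := by
    have : Finset.Ioo t (t+1) = ∅ := by
      ext s; simp only [Finset.mem_Ioo, Finset.notMem_empty, iff_false]; omega
    simp [wt, between, this]
  unfold totalWeight
  rw [← Finset.add_sum_erase _ _ hmem, hwt0, zero_add]
  refine Finset.sum_nbij' (fun p => (Ga t p.1, Gb t p.2)) (fun p => (if p.1 ≤ t then p.1 else p.1 - 1, if p.2 ≤ t then p.2 else p.2 - 1)) ?_ ?_ ?_ ?_ ?_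
  · -- maps into the erased set
    rintro ⟨a, b⟩ hp
    simp only [Finset.mem_filter, Finset.mem_product, Finset.mem_range] at hp
    obtain ⟨-, hnbr⟩ := hp
    have h := nbr_back S t i ht h1 h2 a b hnbr
    refine Finset.mem_erase.mpr ⟨?_, ?_⟩
    · intro hGa
      have hfst := congrArg Prod.fst hGa
      simp only [Ga] at hfst
      split at hfst <;> omega
    · simp only [Finset.mem_filter, Finset.mem_product, Finset.mem_range]
      exact ⟨⟨by have := h.1; have := h.2.1; omega, h.2.1⟩, h⟩
  · -- maps back
    rintro ⟨a, b⟩ hp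
    rw [Finset.mem_erase] at hp
    obtain ⟨hne, hp⟩ := hp
    simp only [Finset.mem_filter, Finset.mem_product, Finset.mem_range] at hp
    obtain ⟨⟨ha, hb⟩, hnbr⟩ := hp
    obtain ⟨hat, hbt⟩ := not_endpoint S t i ht h1 h2 a b hnbr hne
    have hab := hnbr.1
    have hblen := hnbr.2.1
    -- show the image pair is a neighbor of S'
    have key : IsNbr (S.eraseIdx (t+1)) (if a ≤ t then a else a - 1) (if b ≤ t then b else b - 1) := by
      refine nbr_conv S t i ht h1 h2 _ _ ?_ ?_ ?_
      · (repeat' split) <;> omega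
      · rw [hlen]; split <;> omega
      · have hGa : Ga t (if a ≤ t then a else a - 1) = a := by
          simp only [Ga]; (repeat' split) <;> omega
        have hGb : Gb t (if b ≤ t then b else b - 1) = b := by
          simp only [Gb]; (repeat' split) <;> omega
        rw [hGa, hGb]; exact hnbr
    simp only [Finset.mem_filter, Finset.mem_product, Finset.mem_range]
    exact ⟨⟨by have := key.1; have := key.2.1; omega, key.2.1⟩, key⟩
  · -- left inverse
    rintro ⟨a, b⟩ hp
    simp only [Finset.mem_filter, Finset.mem_product, Finset.mem_range] at hp
    simp only [Ga, Gb, Prod.mk.injEq]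
    constructor
    · (repeat' split) <;> omega
    · (repeat' split) <;> omega
  · -- right inverse
    rintro ⟨a, b⟩ hp
    rw [Finset.mem_erase] at hp
    obtain ⟨hne, hp⟩ := hp
    simp only [Finset.mem_filter, Finset.mem_product, Finset.mem_range] at hp
    obtain ⟨hat, hbt⟩ := not_endpoint S t i ht h1 h2 a b hp.2 hne
    simp only [Ga, Gb, Prod.mk.injEq]
    constructor
    · (repeat' split) <;> omega
    · (repeat' split) <;> omega
  · -- weights agree
    rintro ⟨a, b⟩ hp
    simp only [Finset.mem_filter, Finset.mem_product, Finset.mem_range] at hp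
    have hab := hp.2.1
    simp only [wt, between_back S t i ht h1 h2 a b hab]
end
end

section
/- Let S be a finite sequence over the alphabet {1,...,k} ∪ {B} in which every number 1,...,k occurs at least once, and such that every neighbor pair has at least 2 distinct symbols strictly between its two occurrences. For i ∈ {1,...,k}, define the output of i as the sum of weights of all neighbor pairs of i's, and the input of i as the sum over all neighbor pairs (of any symbol j ≠ i) that contain i strictly between them of 1/(b(b-1)), where b ≥ 2 is the number of distinct symbols strictly between that pair. Then the sum over i of the inputs equals the sum over i of the outputs, and consequently there exists some j ∈ {1,...,k} whose input is at least its output. -/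
open scoped Classical
open Finset

noncomputable section

/-- A neighbor pair whose common symbol is `i`. -/
def NbrOf {k : ℕ} (S : List (Option (Fin k))) (i : Fin k) (t1 t2 : ℕ) : Prop :=
  IsNbr S t1 t2 ∧ seqGet S t1 = some i

/-- Output of `i`: the sum of the weights of all neighbor pairs of `i`'s. -/
def output {k : ℕ} (S : List (Option (Fin k))) (i : Fin k) : ℝ :=
  ∑ p ∈ (Finset.range S.length ×ˢ Finset.range S.length).filter
      (fun p => NbrOf S i p.1 p.2), wt S p.1 p.2

/-- Input of `i`: the sum over all neighbor pairs of other symbols containing `i` strictly in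
between of `1/(b(b-1))`, `b` being the number of distinct symbols strictly between that pair. -/
def inputW {k : ℕ} (S : List (Option (Fin k))) (i : Fin k) : ℝ :=
  ∑ p ∈ (Finset.range S.length ×ˢ Finset.range S.length).filter
      (fun p => IsNbr S p.1 p.2 ∧ seqGet S p.1 ≠ some i ∧ some i ∈ between S p.1 p.2),
    (((between S p.1 p.2).card : ℝ) * (((between S p.1 p.2).card : ℝ) - 1))⁻¹

lemma noSelf {k : ℕ} (S : List (Option (Fin k))) {t1 t2 : ℕ} (h : IsNbr S t1 t2)
    {i : Fin k} (hi : some i ∈ between S t1 t2) : seqGet S t1 ≠ some i := by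
  obtain ⟨hlt, hlen, i₀, h1, h2, h3⟩ := h
  obtain ⟨t, ht, hts⟩ := Finset.mem_image.mp hi
  intro hcon
  have : i₀ = i := by rw [h1] at hcon; exact Option.some_injective _ hcon
  subst this
  exact h3 t (Finset.mem_Ioo.mp ht).1 (Finset.mem_Ioo.mp ht).2 hts

lemma key_count {k : ℕ} (S : List (Option (Fin k))) {t1 t2 : ℕ} (h : IsNbr S t1 t2)
    (hB : (none : Option (Fin k)) ∈ between S t1 t2) :
    (Finset.univ.filter
        (fun i : Fin k => seqGet S t1 ≠ some i ∧ some i ∈ between S t1 t2)).card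
      = (between S t1 t2).card - 1 := by
  have himg : (Finset.univ.filter
      (fun i : Fin k => seqGet S t1 ≠ some i ∧ some i ∈ between S t1 t2)).image some
      = (between S t1 t2).erase none := by
    ext x
    simp only [Finset.mem_image, Finset.mem_filter, Finset.mem_univ, true_and,
      Finset.mem_erase]
    constructor
    · rintro ⟨i, ⟨-, hi⟩, rfl⟩
      exact ⟨by simp, hi⟩
    · rintro ⟨hne, hx⟩
      cases x with
      | none => exact absurd rfl hne
      | some i => exact ⟨i, ⟨noSelf S h hx, hx⟩, rfl⟩
  have := congrArg Finset.card himg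
  rwa [Finset.card_image_of_injective _ (Option.some_injective _),
    Finset.card_erase_of_mem hB] at this

/-- Weight redistribution: the sum of the inputs equals the sum of the outputs, so some symbol
receives at least as much as it gives out. -/
theorem sum_input_eq_sum_output {k : ℕ} (hk : 0 < k) (S : List (Option (Fin k)))
    (hall : ∀ i : Fin k, ∃ t, t < S.length ∧ seqGet S t = some i)
    (hb2 : ∀ t1 t2, IsNbr S t1 t2 → 2 ≤ (between S t1 t2).card)
    (hB : ∀ t1 t2, IsNbr S t1 t2 → (none : Option (Fin k)) ∈ between S t1 t2) :
    (∑ i : Fin k, inputW S i) = (∑ i : Fin k, output S i) ∧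
      ∃ j : Fin k, output S j ≤ inputW S j := by
  have hin : (∑ i : Fin k, inputW S i) = totalWeight S := by
    unfold inputW totalWeight
    have hfe : ∀ i : Fin k, (Finset.range S.length ×ˢ Finset.range S.length).filter
        (fun p => IsNbr S p.1 p.2 ∧ seqGet S p.1 ≠ some i ∧ some i ∈ between S p.1 p.2)
      = ((Finset.range S.length ×ˢ Finset.range S.length).filter
          (fun p => IsNbr S p.1 p.2)).filter
        (fun p => seqGet S p.1 ≠ some i ∧ some i ∈ between S p.1 p.2) := by
      intro i; rw [Finset.filter_filter]
    simp_rw [hfe, Finset.sum_filter]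
    rw [Finset.sum_comm]
    refine Finset.sum_congr rfl fun p hp => ?_
    by_cases hnbr : IsNbr S p.1 p.2
    case neg => simp [hnbr]
    simp only [if_pos hnbr]
    rw [Finset.sum_ite, Finset.sum_const, Finset.sum_const_zero, add_zero,
      key_count S hnbr (hB _ _ hnbr), nsmul_eq_mul]
    have hb := hb2 _ _ hnbr
    have h1b : 1 ≤ (between S p.1 p.2).card := by omega
    rw [wt, Nat.cast_sub h1b, Nat.cast_one]
    have hb0 : ((between S p.1 p.2).card : ℝ) ≠ 0 := by
      exact_mod_cast (by omega : (between S p.1 p.2).card ≠ 0)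
    have hb1 : ((between S p.1 p.2).card : ℝ) - 1 ≠ 0 := by
      have : (2:ℝ) ≤ ((between S p.1 p.2).card : ℝ) := by exact_mod_cast hb
      linarith
    field_simp
  have hout : (∑ i : Fin k, output S i) = totalWeight S := by
    unfold output totalWeight
    have hfe : ∀ i : Fin k, (Finset.range S.length ×ˢ Finset.range S.length).filter
        (fun p => NbrOf S i p.1 p.2)
      = ((Finset.range S.length ×ˢ Finset.range S.length).filter
          (fun p => IsNbr S p.1 p.2)).filter
        (fun p => seqGet S p.1 = some i) := by
      intro i
      rw [Finset.filter_filter]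
      exact Finset.filter_congr (fun p _ => Iff.rfl)
    simp_rw [hfe, Finset.sum_filter]
    rw [Finset.sum_comm]
    refine Finset.sum_congr rfl fun p hp => ?_
    by_cases hnbr : IsNbr S p.1 p.2
    case neg => simp [hnbr]
    simp only [if_pos hnbr]
    obtain ⟨-, -, i₀, h1, -, -⟩ := hnbr
    have hiff : ∀ i : Fin k, (seqGet S p.1 = some i) ↔ (i₀ = i) := by
      intro i; rw [h1]; simp
    simp_rw [hiff]
    rw [Finset.sum_ite_eq]
    simp
  refine ⟨hin.trans hout.symm, ?_⟩
  by_contra hcon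
  push_neg at hcon
  haveI : Nonempty (Fin k) := ⟨⟨0, hk⟩⟩
  have hlt : ∑ i : Fin k, inputW S i < ∑ i : Fin k, output S i :=
    Finset.sum_lt_sum_of_nonempty Finset.univ_nonempty (fun i _ => hcon i)
  rw [hin, hout] at hlt
  exact lt_irrefl _ hlt
end
end

section
/- Let S be a finite sequence over the alphabet {1,...,k} ∪ {B}, let j ∈ {1,...,k}, and let S' be the sequence obtained from S by deleting all occurrences of j. Then the total weight of S' equals the total weight of S minus the output of j plus the input of j, where output of j is the sum of weights of neighbor pairs of j's, and input of j is the sum over all neighbor pairs of symbols i ≠ j having j strictly between them of 1/(b(b-1)), b being the number of distinct symbols strictly between that pair (assume each such pair has b ≥ 2). -/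
open scoped Classical
open Finset

noncomputable section

/-! Deleting `j` from `S` keeps exactly the positions not holding `j`; `List.findIdxNth` sends
position `s` of the shortened sequence `S'` to the position in `S` of its `s`-th kept entry.
This map carries the neighbor pairs of `S'` bijectively onto the neighbor pairs of `S` of symbols
other than `j`, and the symbols strictly inside such a pair lose exactly `j`. So a weight `1/b`
becomes `1/(b-1) = 1/b + 1/(b(b-1))` if `j` was in between and stays `1/b` otherwise, while the
neighbor pairs of `j` itself, whose weights make up the output of `j`, disappear. -/

namespace List
variable {α : Type*} {p : α → Bool} {L : List α}

theorem getD_filter_eq_getD_findIdxNth (s : ℕ) (d : α) :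
    (L.filter p).getD s d = L.getD (L.findIdxNth p s) d := by
  by_cases hs : s < (L.filter p).length
  · rw [getD_eq_getElem _ _ hs, getElem_filter_eq_getElem_getElem_findIdxs]
    simp only [getElem_findIdxs_eq_findIdxNth]
    rw [getD_eq_getElem]
  · rw [← countP_eq_length_filter, not_lt] at hs
    rw [getD_eq_default _ _ (by simpa [← countP_eq_length_filter] using hs),
      findIdxNth_eq_length_of_ge_countP hs, getD_eq_default _ _ le_rfl]

theorem exists_findIdxNth_eq {s₁ s₂ t : ℕ} (h₁ : L.findIdxNth p s₁ < t)
    (h₂ : t < L.findIdxNth p s₂) (ht : t < L.length) (hp : p L[t]) :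
    ∃ s, s₁ < s ∧ s < s₂ ∧ L.findIdxNth p s = t := by
  have hσ := findIdxNth_countPBefore_of_lt_length_of_pos hp
  rw [← hσ, findIdxNth_lt_findIdxNth_iff] at h₁ h₂
  exact ⟨_, h₁.2, h₂.2, hσ⟩

theorem findIdxNth_lt_findIdxNth_of_lt {s₁ s₂ : ℕ} (h : s₁ < s₂)
    (hs₂ : s₂ ≤ (L.filter p).length) : L.findIdxNth p s₁ < L.findIdxNth p s₂ := by
  rw [findIdxNth_lt_findIdxNth_iff, countP_eq_length_filter]
  exact ⟨h.trans_le hs₂, h⟩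

end List

section
variable {k : ℕ} {S : List (Option (Fin k))} {q : Option (Fin k) → Bool}

theorem seqGet_filter (s : ℕ) : seqGet (S.filter q) s = seqGet S (S.findIdxNth q s) :=
  List.getD_filter_eq_getD_findIdxNth s none

theorem seqGet_eq_getElem {t : ℕ} (ht : t < S.length) : seqGet S t = S[t] :=
  List.getD_eq_getElem _ _ ht

theorem pos_seqGet_findIdxNth {s : ℕ} (hs : S.findIdxNth q s < S.length) :
    q (seqGet S (S.findIdxNth q s)) := by
  rw [seqGet_eq_getElem hs]
  exact List.pos_findIdxNth_getElem

theorem exists_findIdxNth_eq_of_pos_seqGet {s₁ s₂ t : ℕ} (h₁ : S.findIdxNth q s₁ < t)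
    (h₂ : t < S.findIdxNth q s₂) (hq : q (seqGet S t)) :
    ∃ s, s₁ < s ∧ s < s₂ ∧ S.findIdxNth q s = t := by
  have ht : t < S.length := h₂.trans_le List.findIdxNth_le_length
  rw [seqGet_eq_getElem ht] at hq
  exact List.exists_findIdxNth_eq h₁ h₂ ht hq

theorem isNbr_filter_iff {s₁ s₂ : ℕ} :
    IsNbr (S.filter q) s₁ s₂ ↔ IsNbr S (S.findIdxNth q s₁) (S.findIdxNth q s₂) := by
  simp only [IsNbr, seqGet_filter]
  constructor
  · rintro ⟨h₁₂, hs₂, i, hi₁, hi₂, hno⟩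
    have hlen : S.findIdxNth q s₂ < S.length := by
      rwa [List.findIdxNth_lt_length_iff, List.countP_eq_length_filter]
    have h₁₂' := List.findIdxNth_lt_findIdxNth_of_lt h₁₂ hs₂.le
    have hqi : q (some i) := hi₁ ▸ pos_seqGet_findIdxNth (h₁₂'.trans hlen)
    refine ⟨h₁₂', hlen, i, hi₁, hi₂, fun t ht₁ ht₂ hti => ?_⟩
    obtain ⟨s, hs₁, hs₂', rfl⟩ := exists_findIdxNth_eq_of_pos_seqGet ht₁ ht₂ (hti ▸ hqi)
    exact hno s hs₁ hs₂' hti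
  · rintro ⟨h₁₂, hlen, i, hi₁, hi₂, hno⟩
    have hs₂ : s₂ < (S.filter q).length := by
      rwa [← List.countP_eq_length_filter, ← List.findIdxNth_lt_length_iff]
    have hs₁₂ : s₁ < s₂ := (List.findIdxNth_lt_findIdxNth_iff.mp h₁₂).2
    exact ⟨hs₁₂, hs₂, i, hi₁, hi₂, fun s h₁ h₂ =>
      hno _ (List.findIdxNth_lt_findIdxNth_of_lt h₁ (h₂.trans hs₂).le)
        (List.findIdxNth_lt_findIdxNth_of_lt h₂ hs₂.le)⟩

theorem between_filter {s₁ s₂ : ℕ} (hs₂ : s₂ ≤ (S.filter q).length) :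
    between (S.filter q) s₁ s₂ =
      (between S (S.findIdxNth q s₁) (S.findIdxNth q s₂)).filter (fun x => q x) := by
  ext x
  simp only [between, mem_filter, mem_image, mem_Ioo, seqGet_filter]
  constructor
  · rintro ⟨s, ⟨h₁, h₂⟩, rfl⟩
    have hs : s < (S.filter q).length := h₂.trans_le hs₂
    refine ⟨⟨_, ⟨List.findIdxNth_lt_findIdxNth_of_lt h₁ hs.le,
      List.findIdxNth_lt_findIdxNth_of_lt h₂ hs₂⟩, rfl⟩, pos_seqGet_findIdxNth ?_⟩
    rwa [List.findIdxNth_lt_length_iff, List.countP_eq_length_filter]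
  · rintro ⟨⟨t, ⟨h₁, h₂⟩, rfl⟩, hq⟩
    obtain ⟨s, hs₁, hs₂, rfl⟩ := exists_findIdxNth_eq_of_pos_seqGet h₁ h₂ hq
    exact ⟨s, ⟨hs₁, hs₂⟩, rfl⟩

end

def nbrPairs {k : ℕ} (S : List (Option (Fin k))) : Finset (ℕ × ℕ) :=
  (range S.length ×ˢ range S.length).filter (fun p => IsNbr S p.1 p.2)

section
variable {k : ℕ} {S : List (Option (Fin k))}

theorem mem_nbrPairs {p : ℕ × ℕ} : p ∈ nbrPairs S ↔ IsNbr S p.1 p.2 := by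
  simp only [nbrPairs, mem_filter, mem_product, mem_range, and_iff_right_iff_imp]
  exact fun h => ⟨h.1.trans h.2.1, h.2.1⟩

theorem IsNbr.seqGet_right {t₁ t₂ : ℕ} (h : IsNbr S t₁ t₂) : seqGet S t₂ = seqGet S t₁ := by
  obtain ⟨-, -, i, h₁, h₂, -⟩ := h
  rw [h₁, h₂]

theorem findIdxNth_countPBefore {q : Option (Fin k) → Bool} {t : ℕ} (ht : t < S.length)
    (hq : q (seqGet S t)) : S.findIdxNth q (S.countPBefore q t) = t := by
  rw [seqGet_eq_getElem ht] at hq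
  exact List.findIdxNth_countPBefore_of_lt_length_of_pos hq

theorem sum_nbrPairs_filter {M : Type*} [AddCommMonoid M] (q : Option (Fin k) → Bool)
    (f : ℕ → ℕ → M) :
    ∑ p ∈ nbrPairs (S.filter q), f (S.findIdxNth q p.1) (S.findIdxNth q p.2) =
      ∑ p ∈ (nbrPairs S).filter (fun p => q (seqGet S p.1)), f p.1 p.2 := by
  have hσρ : ∀ p ∈ (nbrPairs S).filter (fun p => q (seqGet S p.1)),
      S.findIdxNth q (S.countPBefore q p.1) = p.1 ∧
        S.findIdxNth q (S.countPBefore q p.2) = p.2 := by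
    simp only [mem_filter, mem_nbrPairs]
    rintro p ⟨hp, hq⟩
    exact ⟨findIdxNth_countPBefore (hp.1.trans hp.2.1) hq,
      findIdxNth_countPBefore hp.2.1 (hp.seqGet_right ▸ hq)⟩
  refine sum_nbij' (fun p => (S.findIdxNth q p.1, S.findIdxNth q p.2))
    (fun p => (S.countPBefore q p.1, S.countPBefore q p.2)) ?_ ?_ ?_ ?_ (fun _ _ => rfl)
  · simp only [mem_filter, mem_nbrPairs, isNbr_filter_iff]
    exact fun p hp => ⟨hp, pos_seqGet_findIdxNth (hp.1.trans hp.2.1)⟩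
  · intro p hp
    simp only [mem_nbrPairs, isNbr_filter_iff, hσρ p hp]
    exact (mem_nbrPairs.mp (mem_filter.mp hp).1)
  · simp only [mem_nbrPairs, IsNbr, ← List.countP_eq_length_filter]
    rintro p ⟨h₁₂, hlen, -⟩
    rw [List.countPBefore_findIdxNth_of_lt_countP (h₁₂.trans hlen),
      List.countPBefore_findIdxNth_of_lt_countP hlen]
  · intro p hp
    simp only [hσρ p hp]

theorem totalWeight_eq_output_add_sum (j : Fin k) :
    totalWeight S = output S j +
      ∑ p ∈ (nbrPairs S).filter (fun p => seqGet S p.1 ≠ some j), wt S p.1 p.2 := by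
  rw [totalWeight, ← sum_filter_add_sum_filter_not _ (fun p => seqGet S p.1 = some j), output,
    nbrPairs, filter_filter]
  congr 1
  exact sum_congr (filter_congr_decidable _ _ _).symm fun _ _ => rfl

theorem inputW_eq_sum (j : Fin k) :
    inputW S j = ∑ p ∈ ((nbrPairs S).filter (fun p => seqGet S p.1 ≠ some j)).filter
        (fun p => some j ∈ between S p.1 p.2),
      (((between S p.1 p.2).card : ℝ) * (((between S p.1 p.2).card : ℝ) - 1))⁻¹ := by
  rw [inputW, nbrPairs, filter_filter, filter_filter]

theorem wt_filter_ne (a : Option (Fin k)) {s₁ s₂ : ℕ}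
    (hs₂ : s₂ ≤ (S.filter (fun x => x ≠ a)).length) :
    wt (S.filter (fun x => x ≠ a)) s₁ s₂ =
      (((between S (S.findIdxNth (fun x => x ≠ a) s₁)
        (S.findIdxNth (fun x => x ≠ a) s₂)).erase a).card : ℝ)⁻¹ := by
  rw [wt, between_filter hs₂]
  simp only [decide_eq_true_eq, filter_ne']

end

theorem inv_card_erase {α : Type*} [DecidableEq α] (B : Finset α) (a : α)
    (h : a ∈ B → 2 ≤ B.card) :
    ((B.erase a).card : ℝ)⁻¹ =
      (B.card : ℝ)⁻¹ + if a ∈ B then ((B.card : ℝ) * (B.card - 1))⁻¹ else 0 := by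
  split_ifs with ha
  · have hb : (2 : ℝ) ≤ B.card := by exact_mod_cast h ha
    rw [card_erase_of_mem ha, Nat.cast_pred (card_pos.mpr ⟨a, ha⟩)]
    have : (B.card : ℝ) - 1 ≠ 0 := by linarith
    field_simp
    ring
  · rw [erase_eq_of_notMem ha, add_zero]

/-- Deleting every occurrence of `j` changes the total weight by `input j - output j`. -/
theorem totalWeight_erase_symbol {k : ℕ} (S : List (Option (Fin k))) (j : Fin k)
    (hb2 : ∀ t1 t2, IsNbr S t1 t2 → seqGet S t1 ≠ some j → some j ∈ between S t1 t2 →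
      2 ≤ (between S t1 t2).card) :
    totalWeight (S.filter (fun x => x ≠ some j)) =
      totalWeight S - output S j + inputW S j := by
  set S' := S.filter (fun x => x ≠ some j)
  set σ := S.findIdxNth (fun x => x ≠ some j)
  let c : ℕ → ℕ → ℝ := fun t₁ t₂ =>
    (((between S t₁ t₂).card : ℝ) * (((between S t₁ t₂).card : ℝ) - 1))⁻¹
  let g : ℕ → ℕ → ℝ := fun t₁ t₂ =>
    wt S t₁ t₂ + if some j ∈ between S t₁ t₂ then c t₁ t₂ else 0
  have hwt : ∀ p ∈ nbrPairs S', wt S' p.1 p.2 = g (σ p.1) (σ p.2) := by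
    intro p hp
    have hS' := mem_nbrPairs.mp hp
    have hS := isNbr_filter_iff.mp hS'
    rw [wt_filter_ne _ hS'.2.1.le, inv_card_erase _ _ (hb2 _ _ hS ?_)]
    · rfl
    · simpa using pos_seqGet_findIdxNth (hS.1.trans hS.2.1)
  calc totalWeight S'
      = ∑ p ∈ (nbrPairs S).filter (fun p => seqGet S p.1 ≠ some j), g p.1 p.2 := by
        rw [totalWeight, ← nbrPairs, sum_congr rfl hwt, sum_nbrPairs_filter _ g]
        simp only [decide_eq_true_eq]
    _ = totalWeight S - output S j + inputW S j := by
        rw [sum_add_distrib, ← sum_filter, totalWeight_eq_output_add_sum j, inputW_eq_sum]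
        ring
end
end
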